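/- In the 1-challenger, n-voter TCR voting game, suppose for every voter i that T − T_C − t_i ≥ T·Q and t_i < T·Q (so no single voter is pivotal from a unanimous profile), and T − T_C ≥ T·Q. Then the set of pure-strategy Nash equilibria is exactly the two unanimous profiles: the profile in which every voter votes Accept and the profile in which every voter votes Reject. -/

import Mathlib

/-!
A voter on the winning side receives her stake plus a nonnegative share of the deposit and
of the slashed tokens, whereas a voter on the losing side is slashed. In a mixed profile a
voter on the losing side can switch sides without changing the outcome, since switching moves
`T_A` further in the direction of the outcome, so she strictly gains. In a unanimous profile
no single voter is pivotal, so a deviator merely moves to the losing side.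
-/

open Finset

/-- Total tokens voting Accept under profile `σ` (`true` = Accept). -/
noncomputable def TA {n : ℕ} (tok : Fin n → ℝ) (σ : Fin n → Bool) : ℝ :=
  ∑ i, if σ i then tok i else 0

/-- Payoff to voter `i` in the 1-challenger, `n`-voter TCR voting game under
profile `σ`.  The candidate is accepted iff `TA tok σ ≥ T * Q`. -/
noncomputable def payoffN {n : ℕ} (tok : Fin n → ℝ)
    (TC T D d s Q V0 Vr : ℝ) (σ : Fin n → Bool) (i : Fin n) : ℝ :=
  if TA tok σ ≥ T * Q then
    if σ i then
      (tok i + (D * (1 - d) + (T - TA tok σ - TC) * s) * tok i / TA tok σ) * Vr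
    else tok i * (1 - s) * Vr
  else
    if σ i then tok i * (1 - s) * V0
    else
      (tok i + (D * (1 - d) + TA tok σ * s) * tok i / (T - TA tok σ - TC)) * V0

/-- `σ` is a Nash equilibrium iff no voter can strictly increase her payoff by
unilaterally changing her vote. -/
def NashEqN {n : ℕ} (tok : Fin n → ℝ) (TC T D d s Q V0 Vr : ℝ)
    (σ : Fin n → Bool) : Prop :=
  ∀ i : Fin n,
    payoffN tok TC T D d s Q V0 Vr σ i ≥
      payoffN tok TC T D d s Q V0 Vr (Function.update σ i (!σ i)) i

section

variable {n : ℕ}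

lemma TA_update (tok : Fin n → ℝ) (σ : Fin n → Bool) (i : Fin n) (b : Bool) :
    TA tok (Function.update σ i b) =
      TA tok σ - (if σ i then tok i else 0) + (if b then tok i else 0) := by
  have hsummand : (fun k => if Function.update σ i b k then tok k else 0) =
      Function.update (fun k => if σ k then tok k else 0) i (if b then tok i else 0) := by
    ext k
    rcases eq_or_ne k i with rfl | hk <;> simp [*]
  have hσ := Finset.sum_update_of_mem (mem_univ i) (fun k => if σ k then tok k else 0)
    (if σ i then tok i else 0)
  rw [Function.update_eq_self] at hσ
  simp only [TA, hsummand, Finset.sum_update_of_mem (mem_univ i), hσ]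
  ring

lemma TA_nonneg {tok : Fin n → ℝ} (htok : ∀ i, 0 ≤ tok i) (σ : Fin n → Bool) :
    0 ≤ TA tok σ :=
  sum_nonneg fun k _ => by split <;> simp [htok k]

lemma TA_le_sum {tok : Fin n → ℝ} (htok : ∀ i, 0 ≤ tok i) (σ : Fin n → Bool) :
    TA tok σ ≤ ∑ i, tok i :=
  sum_le_sum fun k _ => by split <;> simp [htok k]

variable {tok : Fin n → ℝ} {TC T D d s Q V0 Vr : ℝ} {σ : Fin n → Bool} {i : Fin n}

lemma payoffN_of_accepted_of_reject (hA : T * Q ≤ TA tok σ) (hi : σ i = false) :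
    payoffN tok TC T D d s Q V0 Vr σ i = tok i * (1 - s) * Vr := by
  simp [payoffN, hA, hi]

lemma payoffN_of_rejected_of_accept (hA : TA tok σ < T * Q) (hi : σ i = true) :
    payoffN tok TC T D d s Q V0 Vr σ i = tok i * (1 - s) * V0 := by
  simp [payoffN, hA.not_ge, hi]

lemma le_payoffN_of_accepted_of_accept (htok : ∀ i, 0 ≤ tok i) (hT : T = TC + ∑ i, tok i)
    (hD : 0 ≤ D * (1 - d)) (hs : 0 ≤ s) (hVr : 0 ≤ Vr)
    (hA : T * Q ≤ TA tok σ) (hi : σ i = true) :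
    tok i * Vr ≤ payoffN tok TC T D d s Q V0 Vr σ i := by
  have hbonus : 0 ≤ (D * (1 - d) + (T - TA tok σ - TC) * s) * tok i / TA tok σ := by
    have hrest : 0 ≤ T - TA tok σ - TC := by linarith [TA_le_sum htok σ]
    have hTA := TA_nonneg htok σ
    have hti := htok i
    positivity
  simp only [payoffN, ge_iff_le, hA, hi, if_true]
  exact mul_le_mul_of_nonneg_right (le_add_of_nonneg_right hbonus) hVr

lemma le_payoffN_of_rejected_of_reject (htok : ∀ i, 0 ≤ tok i) (hT : T = TC + ∑ i, tok i)
    (hD : 0 ≤ D * (1 - d)) (hs : 0 ≤ s) (hV0 : 0 ≤ V0)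
    (hA : TA tok σ < T * Q) (hi : σ i = false) :
    tok i * V0 ≤ payoffN tok TC T D d s Q V0 Vr σ i := by
  have hbonus : 0 ≤ (D * (1 - d) + TA tok σ * s) * tok i / (T - TA tok σ - TC) := by
    have hrest : 0 ≤ T - TA tok σ - TC := by linarith [TA_le_sum htok σ]
    have hTA := TA_nonneg htok σ
    have hti := htok i
    positivity
  simp only [payoffN, ge_iff_le, hA.not_ge, hi, Bool.false_eq_true, if_false]
  exact mul_le_mul_of_nonneg_right (le_add_of_nonneg_right hbonus) hV0

lemma not_nashEqN_of_accepted (htok : ∀ i, 0 < tok i) (hT : T = TC + ∑ i, tok i)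
    (hD : 0 ≤ D * (1 - d)) (hs : 0 < s) (hVr : 0 < Vr)
    (hA : T * Q ≤ TA tok σ) (hi : σ i = false) :
    ¬ NashEqN tok TC T D d s Q V0 Vr σ := by
  intro hσ
  have hA' : T * Q ≤ TA tok (Function.update σ i true) := by
    rw [TA_update]
    simp only [hi, Bool.false_eq_true, if_false, if_true]
    linarith [htok i]
  have hwin := le_payoffN_of_accepted_of_accept (V0 := V0) (fun k => (htok k).le) hT hD hs.le
    hVr.le hA' (Function.update_self i true σ)
  have hdev := hσ i
  rw [hi, Bool.not_false, payoffN_of_accepted_of_reject hA hi] at hdev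
  have hlose : tok i * (1 - s) * Vr < tok i * Vr :=
    mul_lt_mul_of_pos_right (mul_lt_of_lt_one_right (htok i) (by linarith)) hVr
  linarith

lemma not_nashEqN_of_rejected (htok : ∀ i, 0 < tok i) (hT : T = TC + ∑ i, tok i)
    (hD : 0 ≤ D * (1 - d)) (hs : 0 < s) (hV0 : 0 < V0)
    (hA : TA tok σ < T * Q) (hi : σ i = true) :
    ¬ NashEqN tok TC T D d s Q V0 Vr σ := by
  intro hσ
  have hA' : TA tok (Function.update σ i false) < T * Q := by
    rw [TA_update]
    simp only [hi, Bool.false_eq_true, if_false, if_true]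
    linarith [htok i]
  have hwin := le_payoffN_of_rejected_of_reject (Vr := Vr) (fun k => (htok k).le) hT hD hs.le
    hV0.le hA' (Function.update_self i false σ)
  have hdev := hσ i
  rw [hi, Bool.not_true, payoffN_of_rejected_of_accept hA hi] at hdev
  have hlose : tok i * (1 - s) * V0 < tok i * V0 :=
    mul_lt_mul_of_pos_right (mul_lt_of_lt_one_right (htok i) (by linarith)) hV0
  linarith

lemma nashEqN_all_accept (htok : ∀ i, 0 ≤ tok i) (hT : T = TC + ∑ i, tok i)
    (hD : 0 ≤ D * (1 - d)) (hs : 0 ≤ s) (hVr : 0 ≤ Vr)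
    (hpiv : ∀ i, T * Q ≤ T - TC - tok i) (hacc : T * Q ≤ T - TC) :
    NashEqN tok TC T D d s Q V0 Vr fun _ => true := by
  intro i
  have hA : T * Q ≤ TA tok fun _ => true := by simpa [TA, hT] using hacc
  have hA' : T * Q ≤ TA tok (Function.update (fun _ => true) i false) := by
    rw [TA_update]
    simpa [TA, hT] using hpiv i
  rw [Bool.not_true, payoffN_of_accepted_of_reject hA' (Function.update_self _ _ _)]
  calc tok i * (1 - s) * Vr ≤ tok i * Vr :=
        mul_le_mul_of_nonneg_right (mul_le_of_le_one_right (htok i) (by linarith)) hVr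
    _ ≤ _ := le_payoffN_of_accepted_of_accept htok hT hD hs hVr hA rfl

lemma nashEqN_all_reject (htok : ∀ i, 0 ≤ tok i) (hT : T = TC + ∑ i, tok i)
    (hD : 0 ≤ D * (1 - d)) (hs : 0 ≤ s) (hV0 : 0 ≤ V0)
    (hpiv : ∀ i, tok i < T * Q) (hTQ : 0 < T * Q) :
    NashEqN tok TC T D d s Q V0 Vr fun _ => false := by
  intro i
  have hA : (TA tok fun _ => false) < T * Q := by simpa [TA] using hTQ
  have hA' : TA tok (Function.update (fun _ => false) i true) < T * Q := by
    rw [TA_update]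
    simpa [TA] using hpiv i
  rw [Bool.not_false, payoffN_of_rejected_of_accept hA' (Function.update_self _ _ _)]
  calc tok i * (1 - s) * V0 ≤ tok i * V0 :=
        mul_le_mul_of_nonneg_right (mul_le_of_le_one_right (htok i) (by linarith)) hV0
    _ ≤ _ := le_payoffN_of_rejected_of_reject htok hT hD hs hV0 hA rfl

end

theorem stmt6_general {n : ℕ} (tok : Fin n → ℝ) (htok : ∀ i, 0 < tok i)
    (TC T D d s Q V0 Vr : ℝ) (hTC : 0 < TC) (hT : T = TC + ∑ i, tok i)
    (hD : 0 < D) (hd1 : d < 1) (hs0 : 0 < s)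
    (hQ0 : 0 < Q) (hV0 : 0 < V0) (hVr : 0 < Vr)
    (hpiv : ∀ i, T - TC - tok i ≥ T * Q ∧ tok i < T * Q)
    (hacc : T - TC ≥ T * Q) :
    ∀ σ : Fin n → Bool, NashEqN tok TC T D d s Q V0 Vr σ ↔
      (σ = fun _ => true) ∨ (σ = fun _ => false) := by
  have htok' : ∀ i, 0 ≤ tok i := fun i => (htok i).le
  have hDd : 0 ≤ D * (1 - d) := mul_nonneg hD.le (by linarith)
  intro σ
  refine ⟨fun hσ => ?_, ?_⟩
  · by_contra hmixed
    obtain ⟨hne_accept, hne_reject⟩ := not_or.mp hmixed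
    obtain ⟨j, hj⟩ : ∃ j, σ j = false := by simpa [funext_iff] using hne_accept
    obtain ⟨i, hi⟩ : ∃ i, σ i = true := by simpa [funext_iff] using hne_reject
    rcases le_or_gt (T * Q) (TA tok σ) with hA | hA
    · exact not_nashEqN_of_accepted htok hT hDd hs0 hVr hA hj hσ
    · exact not_nashEqN_of_rejected htok hT hDd hs0 hV0 hA hi hσ
  · have hT0 : 0 < T := hT ▸ add_pos_of_pos_of_nonneg hTC (sum_nonneg fun i _ => htok' i)
    rintro (rfl | rfl)
    · exact nashEqN_all_accept htok' hT hDd hs0.le hVr.le (fun i => (hpiv i).1) hacc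
    · exact nashEqN_all_reject htok' hT hDd hs0.le hV0.le (fun i => (hpiv i).2) (mul_pos hT0 hQ0)

/-- Under the no-pivot conditions (`T − T_C − t_i ≥ T·Q` and `t_i < T·Q` for
every voter `i`) and `T − T_C ≥ T·Q`, the set of pure-strategy Nash equilibria
is exactly the two unanimous profiles: all voters voting Accept and all voters
voting Reject. -/
theorem stmt6 {n : ℕ} (hn : 2 ≤ n) (tok : Fin n → ℝ) (htok : ∀ i, 0 < tok i)
    (TC T D d s Q V0 Vr : ℝ) (hTC : 0 < TC) (hT : T = TC + ∑ i, tok i)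
    (hD : 0 < D) (hd0 : 0 ≤ d) (hd1 : d < 1) (hs0 : 0 < s) (hs1 : s < 1)
    (hQ0 : 0 < Q) (hQ1 : Q ≤ 1) (hV0 : 0 < V0) (hVr : 0 < Vr)
    (hpiv : ∀ i, T - TC - tok i ≥ T * Q ∧ tok i < T * Q)
    (hacc : T - TC ≥ T * Q) :
    ∀ σ : Fin n → Bool, NashEqN tok TC T D d s Q V0 Vr σ ↔
      (σ = fun _ => true) ∨ (σ = fun _ => false) :=
  stmt6_general tok htok TC T D d s Q V0 Vr hTC hT hD hd1 hs0 hQ0 hV0 hVr hpiv hacc
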